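/- The Lie algebra L_{6,4} (the inhomogeneous algebra Isl(2,ℝ)) is a contraction of so(2,2), the real Lie algebra of 4×4 real matrices A satisfying Aᵀ J + J A = 0 with J = diag(1,1,−1,−1), under the commutator bracket. -/

import Mathlib

open Filter Topology

/-- `IsContraction g h` : the Lie algebra `h` is a contraction of the Lie algebra `g`. -/
def IsContraction (g h : Type*) [LieRing g] [LieAlgebra ℝ g] [TopologicalSpace g]
    [LieRing h] [LieAlgebra ℝ h] : Prop :=
  ∃ (f : ℝ → (g ≃ₗ[ℝ] g)) (e : g ≃ₗ[ℝ] h), ∀ X Y : g,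
    Filter.Tendsto (fun t : ℝ => (f t).symm ⁅f t X, f t Y⁆) Filter.atTop
      (nhds (e.symm ⁅e X, e Y⁆))

/-- Structure constants of `L_{6,4}` (upper triangular part, 0-based indices). -/
def L64T {L : Type*} [AddCommGroup L] [Module ℝ L] (b : Fin 6 → L) : Fin 6 → Fin 6 → L :=
  fun i j =>
    if i = 0 ∧ j = 1 then (2 : ℝ) • b 1 else
    if i = 0 ∧ j = 2 then (-2 : ℝ) • b 2 else
    if i = 1 ∧ j = 2 then b 0 else
    if i = 0 ∧ j = 3 then (2 : ℝ) • b 3 else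
    if i = 0 ∧ j = 5 then (-2 : ℝ) • b 5 else
    if i = 1 ∧ j = 4 then (2 : ℝ) • b 3 else
    if i = 1 ∧ j = 5 then b 4 else
    if i = 2 ∧ j = 3 then b 4 else
    if i = 2 ∧ j = 4 then (2 : ℝ) • b 5 else 0

attribute [local instance 100] LieRing.ofAssociativeRing

/-- `so(2,2)`: `4×4` real matrices `A` with `Aᵀ J + J A = 0`, `J = diag(1,1,-1,-1)`. -/
noncomputable abbrev so22 : LieSubalgebra ℝ (Matrix (Fin 4) (Fin 4) ℝ) :=
  skewAdjointMatricesLieSubalgebra (Matrix.diagonal ![1, 1, -1, -1])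

/-!
Inside `so(2,2)`, the matrices supported on the last three rows and columns form a copy `h` of
`so(1,2) ≅ sl(2,ℝ)`, and those supported on the first row and column form a complement `V` with
`[h, V] ⊆ V` (the three-dimensional irreducible representation) and `[V, V] ⊆ h`. Rescaling `V` by
`s = e⁻ᵗ → 0` (the İnönü–Wigner contraction along `h`) leaves the bracket on `h` and the action of
`h` on `V` unchanged and sends `[V, V]` to zero; the limit `sl(2,ℝ) ⋉ ℝ³` has, in a suitable basis
of `so(2,2)`, exactly the structure constants of `L_{6,4}`.
-/

theorem IsIdempotentElem.add_smul_one_sub_mul_add_smul_one_sub {R A : Type*} [CommRing R] [Ring A]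
    [Algebra R A] {p : A} (hp : IsIdempotentElem p) (s t : R) :
    (p + s • (1 - p)) * (p + t • (1 - p)) = p + (s * t) • (1 - p) := by
  simp only [add_mul, mul_add, Algebra.mul_smul_comm, Algebra.smul_mul_assoc, hp.eq,
    hp.mul_one_sub_self, hp.one_sub_mul_self, hp.one_sub.eq, smul_zero, add_zero, zero_add, smul_smul,
    mul_comm t s]

section InonuWigner

variable {R g : Type*} [CommRing R] [LieRing g] [LieAlgebra R g]

/-- The İnönü–Wigner contraction along the subalgebra `range p`, in which `ker p` becomes an abelian
ideal. -/
def inonuWignerBracket (p : Module.End R g) : g →ₗ[R] g →ₗ[R] g :=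
  LinearMap.mk₂ R (fun X Y => ⁅p X, p Y⁆ + (1 - p) (⁅p X, (1 - p) Y⁆ + ⁅(1 - p) X, p Y⁆))
    (fun X X' Y => by simp only [map_add, add_lie]; abel)
    (fun r X Y => by simp only [map_smul, smul_lie, ← smul_add])
    (fun X Y Y' => by simp only [map_add, lie_add]; abel)
    (fun r X Y => by simp only [map_smul, lie_smul, ← smul_add])

lemma inonuWignerBracket_apply (p : Module.End R g) (X Y : g) :
    inonuWignerBracket p X Y = ⁅p X, p Y⁆ + (1 - p) (⁅p X, (1 - p) Y⁆ + ⁅(1 - p) X, p Y⁆) :=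
  rfl

lemma inonuWignerBracket_isAlt (p : Module.End R g) : (inonuWignerBracket p).IsAlt := fun X => by
  rw [inonuWignerBracket_apply, lie_self, ← lie_skew (p X), neg_add_cancel, map_zero, add_zero]

end InonuWigner

section InonuWignerScaling

variable {K g : Type*} [Field K] [LieRing g] [LieAlgebra K g]
  {p : Module.End K g} (hp : IsIdempotentElem p) {s : K} (hs : s ≠ 0)

def inonuWignerScaling : g ≃ₗ[K] g :=
  LinearEquiv.ofLinearMap (p + s • (1 - p)) (p + s⁻¹ • (1 - p))
    (by
      have h := hp.add_smul_one_sub_mul_add_smul_one_sub s s⁻¹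
      rwa [mul_inv_cancel₀ hs, one_smul, add_sub_cancel] at h)
    (by
      have h := hp.add_smul_one_sub_mul_add_smul_one_sub s⁻¹ s
      rwa [inv_mul_cancel₀ hs, one_smul, add_sub_cancel] at h)

lemma inonuWignerScaling_apply (X : g) : inonuWignerScaling hp hs X = p X + s • (1 - p) X :=
  rfl

lemma inonuWignerScaling_symm_apply (X : g) :
    (inonuWignerScaling hp hs).symm X = p X + s⁻¹ • (1 - p) X :=
  rfl

lemma inonuWignerScaling_symm_lie (hsub : ∀ X Y, p ⁅p X, p Y⁆ = ⁅p X, p Y⁆) (X Y : g) :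
    (inonuWignerScaling hp hs).symm ⁅inonuWignerScaling hp hs X, inonuWignerScaling hp hs Y⁆ =
      inonuWignerBracket p X Y +
        s • (p (⁅p X, (1 - p) Y⁆ + ⁅(1 - p) X, p Y⁆) + (1 - p) ⁅(1 - p) X, (1 - p) Y⁆) +
        s ^ 2 • p ⁅(1 - p) X, (1 - p) Y⁆ := by
  have hq : (1 - p) ⁅p X, p Y⁆ = 0 := by
    rw [LinearMap.sub_apply, hsub, Module.End.one_apply, sub_self]
  simp only [inonuWignerScaling_apply, inonuWignerScaling_symm_apply, inonuWignerBracket_apply,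
    lie_add, add_lie, lie_smul, smul_lie, map_add, map_smul, hsub, hq, smul_zero]
  match_scalars <;> field_simp

end InonuWignerScaling

section Contraction

variable {g : Type*} [LieRing g] [LieAlgebra ℝ g] {p : Module.End ℝ g}

theorem tendsto_inonuWignerScaling_symm_lie [TopologicalSpace g] [ContinuousAdd g]
    [ContinuousSMul ℝ g] (hp : IsIdempotentElem p) (hsub : ∀ X Y, p ⁅p X, p Y⁆ = ⁅p X, p Y⁆)
    (X Y : g) :
    Tendsto (fun t : ℝ => (inonuWignerScaling hp (Real.exp_ne_zero (-t))).symm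
        ⁅inonuWignerScaling hp (Real.exp_ne_zero (-t)) X,
          inonuWignerScaling hp (Real.exp_ne_zero (-t)) Y⁆)
      atTop (𝓝 (inonuWignerBracket p X Y)) := by
  simp only [inonuWignerScaling_symm_lie hp _ hsub]
  have hs := Real.tendsto_exp_neg_atTop_nhds_zero
  have key (A B C : g) :
      Tendsto (fun t : ℝ => A + Real.exp (-t) • B + Real.exp (-t) ^ 2 • C) atTop (𝓝 A) := by
    simpa using (tendsto_const_nhds.add (hs.smul_const B)).add ((hs.pow 2).smul_const C)
  exact key _ _ _

theorem isContraction_of_inonuWigner {h : Type*} [TopologicalSpace g] [ContinuousAdd g]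
    [ContinuousSMul ℝ g] [LieRing h] [LieAlgebra ℝ h] (hp : IsIdempotentElem p)
    (hsub : ∀ X Y, p ⁅p X, p Y⁆ = ⁅p X, p Y⁆) (e : g ≃ₗ[ℝ] h)
    (he : ∀ X Y, e (inonuWignerBracket p X Y) = ⁅e X, e Y⁆) : IsContraction g h :=
  ⟨fun t => inonuWignerScaling hp (Real.exp_ne_zero (-t)), e, fun X Y => by
    rw [← he, e.symm_apply_apply]
    exact tendsto_inonuWignerScaling_symm_lie hp hsub X Y⟩

end Contraction

theorem LinearMap.IsAlt.ext_basis_of_lt {R M N ι : Type*} [CommRing R] [AddCommGroup M]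
    [Module R M] [AddCommGroup N] [Module R N] [LinearOrder ι] (b : Module.Basis ι R M)
    {B B' : M →ₗ[R] M →ₗ[R] N} (hB : B.IsAlt) (hB' : B'.IsAlt)
    (h : ∀ i j, i < j → B (b i) (b j) = B' (b i) (b j)) : B = B' := by
  refine LinearMap.ext_basis b b fun i j => ?_
  rcases lt_trichotomy i j with hij | rfl | hji
  · exact h i j hij
  · rw [hB.self_eq_zero, hB'.self_eq_zero]
  · rw [← hB.neg, ← hB'.neg, h j i hji]

theorem LinearMap.map_apply_eq_lie_of_basis {R V L ι : Type*} [CommRing R] [AddCommGroup V]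
    [Module R V] [LieRing L] [LieAlgebra R L] [LinearOrder ι] (b : Module.Basis ι R V)
    {β : V →ₗ[R] V →ₗ[R] V} (hβ : β.IsAlt) (e : V →ₗ[R] L)
    (h : ∀ i j, i < j → e (β (b i) (b j)) = ⁅e (b i), e (b j)⁆) (X Y : V) :
    e (β X Y) = ⁅e X, e Y⁆ := by
  have key : β.compr₂ e = (LieModule.toEnd R L L : L →ₗ[R] Module.End R L).compl₁₂ e e :=
    LinearMap.IsAlt.ext_basis_of_lt b (fun X => by simp [hβ.self_eq_zero])
      (fun X => by simp) (fun i j hij => by simpa using h i j hij)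
  simpa using LinearMap.congr_fun₂ key X Y

instance LieSubalgebra.continuousAdd {R L : Type*} [CommRing R] [LieRing L] [LieAlgebra R L]
    [TopologicalSpace L] [ContinuousAdd L] (K : LieSubalgebra R L) : ContinuousAdd K :=
  Topology.IsInducing.continuousAdd K.incl ⟨rfl⟩

section SkewAdjoint

open Matrix

variable {R n : Type*} [CommRing R] [Fintype n] [DecidableEq n]

theorem mem_skewAdjointMatricesSubmodule_diagonal_iff {d : n → R} {A : Matrix n n R} :
    A ∈ skewAdjointMatricesSubmodule (diagonal d) ↔ ∀ i j, A j i * d j = -(d i * A i j) := by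
  rw [mem_skewAdjointMatricesSubmodule, Matrix.IsSkewAdjoint, Matrix.IsAdjointPair, ← Matrix.ext_iff]
  simp [Matrix.mul_diagonal, Matrix.diagonal_mul]

theorem mul_mul_mem_skewAdjointMatricesSubmodule {J D A : Matrix n n R} (hD : Dᵀ = D)
    (hDJ : Commute D J) (hA : A ∈ skewAdjointMatricesSubmodule J) :
    D * A * D ∈ skewAdjointMatricesSubmodule J := by
  rw [mem_skewAdjointMatricesSubmodule, Matrix.IsSkewAdjoint, Matrix.IsAdjointPair] at hA ⊢
  calc (D * A * D)ᵀ * J = D * Aᵀ * (D * J) := by simp only [transpose_mul, hD, mul_assoc]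
    _ = D * (Aᵀ * J) * D := by rw [hDJ.eq]; simp only [mul_assoc]
    _ = J * -(D * A * D) := by
      rw [hA, ← mul_assoc, hDJ.eq]; simp only [mul_neg, neg_mul, mul_assoc]

end SkewAdjoint

namespace So22

open Matrix

lemma entries_of_mem {A : Matrix (Fin 4) (Fin 4) ℝ} (hA : A ∈ so22) :
    A 0 0 = 0 ∧ A 1 1 = 0 ∧ A 2 2 = 0 ∧ A 3 3 = 0 ∧ A 1 0 = -A 0 1 ∧ A 2 0 = A 0 2 ∧
      A 3 0 = A 0 3 ∧ A 2 1 = A 1 2 ∧ A 3 1 = A 1 3 ∧ A 3 2 = -A 2 3 := by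
  rw [mem_skewAdjointMatricesLieSubalgebra,
    mem_skewAdjointMatricesSubmodule_diagonal_iff (n := Fin 4)] at hA
  have h00 := hA 0 0; have h11 := hA 1 1; have h22 := hA 2 2; have h33 := hA 3 3
  have h01 := hA 0 1; have h02 := hA 0 2; have h03 := hA 0 3
  have h12 := hA 1 2; have h13 := hA 1 3; have h23 := hA 2 3
  simp at h00 h11 h22 h33 h01 h02 h03 h12 h13 h23
  refine ⟨?_, ?_, ?_, ?_, ?_, ?_, ?_, ?_, ?_, ?_⟩ <;> linarith

/-- `basisMat 0, 1, 2` is an `sl₂`-triple `(h, e, f)` spanning `so(1,2)` in the last three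
coordinates; `basisMat 3, 4, 5` span the first row and column. -/
def basisMat : Fin 6 → Matrix (Fin 4) (Fin 4) ℝ
  | 0 => !![0, 0, 0, 0; 0, 0, 0, 2; 0, 0, 0, 0; 0, 2, 0, 0]
  | 1 => !![0, 0, 0, 0; 0, 0, -1, 0; 0, -1, 0, 1; 0, 0, -1, 0]
  | 2 => !![0, 0, 0, 0; 0, 0, -1, 0; 0, -1, 0, -1; 0, 0, 1, 0]
  | 3 => !![0, -1, 0, 1; 1, 0, 0, 0; 0, 0, 0, 0; 1, 0, 0, 0]
  | 4 => !![0, 0, -2, 0; 0, 0, 0, 0; -2, 0, 0, 0; 0, 0, 0, 0]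
  | 5 => !![0, -1, 0, -1; 1, 0, 0, 0; 0, 0, 0, 0; -1, 0, 0, 0]

lemma basisMat_mem (k : Fin 6) : basisMat k ∈ so22 := by
  rw [mem_skewAdjointMatricesLieSubalgebra,
    mem_skewAdjointMatricesSubmodule_diagonal_iff (n := Fin 4)]
  intro i j
  fin_cases k <;> fin_cases i <;> fin_cases j <;> simp [basisMat]

noncomputable def coord : Matrix (Fin 4) (Fin 4) ℝ →ₗ[ℝ] Fin 6 → ℝ where
  toFun A := ![A 1 3 / 2, (A 2 3 - A 1 2) / 2, -(A 1 2 + A 2 3) / 2, (A 0 3 - A 0 1) / 2,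
    -A 0 2 / 2, -(A 0 1 + A 0 3) / 2]
  map_add' A B := by ext k; fin_cases k <;> simp <;> ring
  map_smul' r A := by ext k; fin_cases k <;> simp <;> ring

lemma coord_basisMat (k : Fin 6) : coord (basisMat k) = Pi.single k 1 := by
  ext j; fin_cases k <;> fin_cases j <;> simp [coord, basisMat]

lemma sum_coord_smul_basisMat {A : Matrix (Fin 4) (Fin 4) ℝ} (hA : A ∈ so22) :
    ∑ k, coord A k • basisMat k = A := by
  obtain ⟨h00, h11, h22, h33, h10, h20, h30, h21, h31, h32⟩ := entries_of_mem hA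
  ext i j
  simp only [Fin.sum_univ_six, Matrix.add_apply, Matrix.smul_apply]
  fin_cases i <;> fin_cases j <;> simp [coord, basisMat] <;> linarith

noncomputable def basis : Module.Basis (Fin 6) ℝ so22 :=
  .mk (v := fun k => ⟨basisMat k, basisMat_mem k⟩)
    (LinearIndependent.of_comp (coord ∘ₗ (so22.incl : so22 →ₗ[ℝ] Matrix (Fin 4) (Fin 4) ℝ)) (by
      convert (Pi.basisFun ℝ (Fin 6)).linearIndependent using 1
      ext1 k
      simp [coord_basisMat]))
    (fun A _ => (Submodule.mem_span_range_iff_exists_fun ℝ).2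
      ⟨coord A, Subtype.ext (by simpa using sum_coord_smul_basisMat A.2)⟩)

lemma coe_basis (k : Fin 6) : (basis k : Matrix (Fin 4) (Fin 4) ℝ) = basisMat k := by
  simp [basis]

/-- `A ↦ cornerIdem * A * cornerIdem` projects `so(2,2)` onto `so(1,2)` by killing the first row
and column. -/
def cornerIdem : Matrix (Fin 4) (Fin 4) ℝ := diagonal ![0, 1, 1, 1]

lemma cornerIdem_mul_self : cornerIdem * cornerIdem = cornerIdem := by
  rw [cornerIdem, diagonal_mul_diagonal]
  congr 1
  ext k
  fin_cases k <;> simp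

lemma cornerIdem_mul_cornerIdem_mul (A : Matrix (Fin 4) (Fin 4) ℝ) :
    cornerIdem * (cornerIdem * A) = cornerIdem * A := by
  rw [← mul_assoc, cornerIdem_mul_self]

lemma cornerIdem_mul_mul_mem {A : Matrix (Fin 4) (Fin 4) ℝ} (hA : A ∈ so22) :
    cornerIdem * A * cornerIdem ∈ so22 :=
  mul_mul_mem_skewAdjointMatricesSubmodule (diagonal_transpose _) (commute_diagonal _ _) hA

noncomputable def proj : Module.End ℝ so22 where
  toFun A := ⟨cornerIdem * A * cornerIdem, cornerIdem_mul_mul_mem A.2⟩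
  map_add' A B := Subtype.ext (by simp [mul_add, add_mul])
  map_smul' r A := Subtype.ext (by simp)

lemma coe_proj (A : so22) : (proj A : Matrix (Fin 4) (Fin 4) ℝ) = cornerIdem * A * cornerIdem :=
  rfl

lemma isIdempotentElem_proj : IsIdempotentElem proj :=
  LinearMap.ext fun A => Subtype.ext (by
    simp only [Module.End.mul_apply, coe_proj, mul_assoc, cornerIdem_mul_self,
      cornerIdem_mul_cornerIdem_mul])

lemma proj_lie_proj (X Y : so22) : proj ⁅proj X, proj Y⁆ = ⁅proj X, proj Y⁆ :=
  Subtype.ext (by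
    simp only [coe_proj, LieSubalgebra.coe_bracket, Ring.lie_def, mul_sub, sub_mul, mul_assoc,
      cornerIdem_mul_self, cornerIdem_mul_cornerIdem_mul])

lemma proj_basis_of_lt {k : Fin 6} (hk : (k : ℕ) < 3) : proj (basis k) = basis k := by
  apply Subtype.ext
  rw [coe_proj, coe_basis]
  ext a b
  fin_cases k <;> simp at hk <;> fin_cases a <;> fin_cases b <;> simp [cornerIdem, basisMat]

lemma proj_basis_of_le {k : Fin 6} (hk : 3 ≤ (k : ℕ)) : proj (basis k) = 0 := by
  apply Subtype.ext
  rw [coe_proj, coe_basis]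
  ext a b
  fin_cases k <;> simp at hk <;> fin_cases a <;> fin_cases b <;> simp [cornerIdem, basisMat]

lemma lie_basis_of_lt {i j : Fin 6} (hi : (i : ℕ) < 3) (hij : i < j) :
    ⁅basis i, basis j⁆ = L64T basis i j := by
  apply Subtype.ext
  rw [LieSubalgebra.coe_bracket, Ring.lie_def, coe_basis, coe_basis]
  fin_cases i <;> fin_cases j <;> simp at hi hij <;> simp [L64T, coe_basis]
  all_goals
    ext a b
    fin_cases a <;> simp [basisMat] <;> fin_cases b <;> norm_num

lemma inonuWignerBracket_basis {i j : Fin 6} (hij : i < j) :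
    inonuWignerBracket proj (basis i) (basis j) = L64T basis i j := by
  have hq {k : Fin 6} (hk : 3 ≤ (k : ℕ)) : (1 - proj) (basis k) = basis k := by
    rw [LinearMap.sub_apply, proj_basis_of_le hk, Module.End.one_apply, sub_zero]
  have hq' {k : Fin 6} (hk : (k : ℕ) < 3) : (1 - proj) (basis k) = 0 := by
    rw [LinearMap.sub_apply, proj_basis_of_lt hk, Module.End.one_apply, sub_self]
  have hij' : (i : ℕ) < j := hij
  rw [inonuWignerBracket_apply]
  rcases lt_or_ge (j : ℕ) 3 with hj | hj
  · have hi : (i : ℕ) < 3 := hij'.trans hj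
    rw [proj_basis_of_lt hi, proj_basis_of_lt hj, hq' hi, hq' hj, lie_basis_of_lt hi hij]
    simp
  rcases lt_or_ge (i : ℕ) 3 with hi | hi
  · rw [proj_basis_of_lt hi, proj_basis_of_le hj, hq' hi, hq hj, lie_basis_of_lt hi hij]
    fin_cases i <;> fin_cases j <;> simp at hi hj hij <;> simp [L64T, hq, proj_basis_of_le]
  · rw [proj_basis_of_le hi, proj_basis_of_le hj]
    fin_cases i <;> fin_cases j <;> simp at hi hj hij <;> simp [L64T]

end So22

lemma map_L64T {L L' : Type*} [AddCommGroup L] [Module ℝ L] [AddCommGroup L'] [Module ℝ L']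
    (f : L →ₗ[ℝ] L') (b : Fin 6 → L) (i j : Fin 6) : f (L64T b i j) = L64T (f ∘ b) i j := by
  unfold L64T
  split_ifs <;> simp

/-- `L_{6,4} = Isl(2,ℝ)` is a contraction of `so(2,2)`. -/
theorem L64_is_contraction_of_so22
    (M : Type) [LieRing M] [LieAlgebra ℝ M] (c : Module.Basis (Fin 6) ℝ M)
    (hM : ∀ i j : Fin 6, i < j → ⁅c i, c j⁆ = L64T (⇑c) i j) :
    IsContraction (↥so22) M := by
  set e := So22.basis.equiv c (Equiv.refl _)
  have he (k : Fin 6) : e (So22.basis k) = c k := So22.basis.equiv_apply k c _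
  refine isContraction_of_inonuWigner So22.isIdempotentElem_proj So22.proj_lie_proj e fun X Y => ?_
  refine LinearMap.map_apply_eq_lie_of_basis So22.basis (inonuWignerBracket_isAlt _) e.toLinearMap
    (fun i j hij => ?_) X Y
  simp only [LinearEquiv.coe_coe, So22.inonuWignerBracket_basis hij, map_L64T, Function.comp_def, he,
    hM i j hij]
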